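/- For each of the six pairs (u, v) of polynomials in ℚ[t] given by (x₀, y₀) [the conic C₃], (5t² − 32t + 48, 10t³ − 114t² + 392t − 408) [the conic C₃′], (x₁, y₁) [the line L₁], (0, −6t) [the line L₂], (10t − 25, 6t − 30) [the line L₃], and (x₄, y₄) [the line L₄], the identity (u − t²)(u² − 10·t·u + 25·u − 36) = v² holds in ℚ[t]. Hence each of the curves C₃, C₃′, L₁, L₂, L₃, L₄ meets the quartic 𝒬 = C₁ + C₂ with even intersection multiplicity at every point: they are contact curves of 𝒬, and their preimages under the double cover branched along 𝒬 split into two components. -/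
import Mathlib


open Polynomial

noncomputable section

/-- `x₀ = (5/4)t² - 2t + 3`, the `x`-coordinate of the lift of the conic `C₃`. -/
def x0 : ℚ[X] := C (5 / 4) * X ^ 2 - C 2 * X + C 3

/-- `y₀ = (5/8)t³ - 6t² + (31/2)t - 12`, the `y`-coordinate of the lift of `C₃`. -/
def y0 : ℚ[X] := C (5 / 8) * X ^ 3 - C 6 * X ^ 2 + C (31 / 2) * X - C 12

/-- `x₁ = (32/5)t - 256/25` (the line `L₁`). -/
def x1 : ℚ[X] := C (32 / 5) * X - C (256 / 25)

/-- `y₁ = (24/5)t² - (726/25)t + 5472/125`. -/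
def y1 : ℚ[X] := C (24 / 5) * X ^ 2 - C (726 / 25) * X + C (5472 / 125)

/-- `x₄ = (18/5)t - 81/25` (the line `L₄`). -/
def x4 : ℚ[X] := C (18 / 5) * X - C (81 / 25)

/-- `y₄ = (24/5)t² - (474/25)t + 2322/125`. -/
def y4 : ℚ[X] := C (24 / 5) * X ^ 2 - C (474 / 25) * X + C (2322 / 125)

/-- The identity `(u - t²)(u² - 10tu + 25u - 36) = v²` in `ℚ[t]`, saying that the curve
`x = u(t)` is a contact curve of the quartic `𝒬 = C₁ + C₂` whose preimage under the double
cover `y² = (x - t²)(x² - 10tx + 25x - 36)` splits into the two components `y = ±v(t)`. -/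
def ContactIdentity (u v : ℚ[X]) : Prop :=
  (u - X ^ 2) * (u ^ 2 - C 10 * X * u + C 25 * u - C 36) = v ^ 2

/-- Each of `C₃`, `C₃′`, `L₁`, `L₂`, `L₃`, `L₄` is a contact curve of the quartic
`𝒬 = C₁ + C₂`: the identity `(u - t²)(u² - 10tu + 25u - 36) = v²` holds in `ℚ[t]`
for the six pairs `(u, v)` of their defining data, so the preimage of each under the
double cover branched along `𝒬` splits into two components. -/
theorem contact_identities :
    ContactIdentity x0 y0 ∧
    ContactIdentity (C 5 * X ^ 2 - C 32 * X + C 48)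
      (C 10 * X ^ 3 - C 114 * X ^ 2 + C 392 * X - C 408) ∧
    ContactIdentity x1 y1 ∧
    ContactIdentity 0 (-(C 6 * X)) ∧
    ContactIdentity (C 10 * X - C 25) (C 6 * X - C 30) ∧
    ContactIdentity x4 y4 := by
  refine ⟨?_, ?_, ?_, ?_, ?_, ?_⟩ <;>
    · simp only [ContactIdentity, x0, y0, x1, y1, x4, y4]
      refine Polynomial.funext fun r => ?_
      simp only [eval_mul, eval_add, eval_sub, eval_pow, eval_neg, eval_C, eval_X, eval_zero]
      ring

end
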